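/- Announcement and removal modalities do not commute in the expected recursion pattern: the formulas ⟨!α⟩⟨-φ⟩ψ and α ∧ ⟨-⟨!α⟩φ⟩⟨!α⟩ψ are not equivalent. Specifically, with α = ◇p, φ = □⊥, ψ = ⊤, there is a model and point where one holds and the other fails. -/

import Mathlib

/-- MLSR with nominals, public announcement, and the global modality:
φ ::= p | n | ⊤ | ¬φ | φ∨φ | ◇φ | ⟨!φ⟩φ | ⟨-φ⟩φ | Eφ. -/
inductive Form : Type where
  | atom : ℕ → Form
  | nom : ℕ → Form
  | top : Form
  | neg : Form → Form
  | or : Form → Form → Form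
  | dia : Form → Form
  | ann : Form → Form → Form
  | rem : Form → Form → Form
  | E : Form → Form

/-- A relational model with a valuation for proposition letters and a partial
naming function for nominals (each nominal names at most one point). -/
structure Model (W : Type) where
  R : W → W → Prop
  V : ℕ → W → Prop
  Nm : ℕ → Option W

/-- Truth relative to a current domain `D` (submodel semantics): announcement
⟨!φ⟩ψ restricts the domain to the points satisfying φ, removal ⟨-φ⟩ψ deletes a
single φ-point distinct from the current one, E is the global modality. -/
def Sat {W : Type} (M : Model W) : Form → Set W → W → Prop
  | .atom p, _, s => M.V p s
  | .nom n, _, s => M.Nm n = some s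
  | .top, _, _ => True
  | .neg φ, D, s => ¬ Sat M φ D s
  | .or φ ψ, D, s => Sat M φ D s ∨ Sat M ψ D s
  | .dia φ, D, s => ∃ t ∈ D, M.R s t ∧ Sat M φ D t
  | .ann φ ψ, D, s => Sat M φ D s ∧ Sat M ψ {t | t ∈ D ∧ Sat M φ D t} s
  | .rem φ ψ, D, s => ∃ t ∈ D, t ≠ s ∧ Sat M φ D t ∧ Sat M ψ (D \ {t}) s
  | .E φ, D, _ => ∃ t ∈ D, Sat M φ D t

/-- Conjunction, defined from ¬ and ∨. -/
def Form.and (a b : Form) : Form := .neg (.or (.neg a) (.neg b))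

/-!
Take the path `0 → 1 → 2` with `p` true at `1` and `2`. Announcing `◇p` at `0` deletes the dead
end `2`, which turns `1` into a dead end that can then be removed. On the other side the removed
point must again be `1` (it is the only point other than `0` satisfying `◇p`), but now it is removed
before the announcement, so `0` loses its only successor and `◇p` fails there.
-/

section Semantics

variable {W : Type} (M : Model W) (D : Set W) (s : W)

theorem sat_and (a b : Form) : Sat M (a.and b) D s ↔ Sat M a D s ∧ Sat M b D s := by
  simp only [Form.and, Sat, not_or, not_not]

theorem sat_box_bot : Sat M (.neg (.dia .top)) D s ↔ ∀ t ∈ D, ¬ M.R s t := by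
  simp [Sat]

theorem sat_ann_top (a : Form) : Sat M (.ann a .top) D s ↔ Sat M a D s := by
  simp [Sat]

theorem sat_dia_atom (p : ℕ) : Sat M (.dia (.atom p)) D s ↔ ∃ t ∈ D, M.R s t ∧ M.V p t := by
  simp [Sat]

end Semantics

def path3 : Model (Fin 3) where
  R x y := x.val + 1 = y.val
  V _ x := x ≠ 0
  Nm _ := none

theorem path3_sat_dia_atom_iff (p : ℕ) (D : Set (Fin 3)) (s : Fin 3) :
    Sat path3 (.dia (.atom p)) D s ↔ s ≠ 2 ∧ s + 1 ∈ D := by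
  rw [sat_dia_atom]
  fin_cases s <;> simp [path3, Fin.exists_fin_succ]

theorem path3_sat_announce_remove_dead_end :
    Sat path3 (.ann (.dia (.atom 0)) (.rem (.neg (.dia .top)) .top)) Set.univ 0 := by
  have h1 : 1 ∈ {t | t ∈ Set.univ ∧ Sat path3 (.dia (.atom 0)) Set.univ t} :=
    ⟨trivial, (path3_sat_dia_atom_iff _ _ 1).2 ⟨by decide, trivial⟩⟩
  refine ⟨(path3_sat_dia_atom_iff _ _ 0).2 ⟨by decide, trivial⟩, 1, h1, by decide, ?_, trivial⟩
  rw [sat_box_bot]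
  rintro t ⟨-, ht⟩ h1t
  rw [path3_sat_dia_atom_iff] at ht
  exact ht.1 (Fin.ext h1t.symm)

theorem path3_not_sat_remove_then_announce :
    ¬ Sat path3 (Form.and (.dia (.atom 0))
        (.rem (.ann (.dia (.atom 0)) (.neg (.dia .top))) (.ann (.dia (.atom 0)) .top))) Set.univ 0 := by
  rw [sat_and]
  rintro ⟨-, t, -, ht0, ⟨htp, -⟩, h0⟩
  rw [sat_ann_top, path3_sat_dia_atom_iff] at h0
  rw [path3_sat_dia_atom_iff] at htp
  have ht1 : t ≠ 1 := fun h => h0.2.2 (by simp [h])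
  fin_cases t <;> simp_all

/-- With α = ◇p, φ = □⊥ (= ¬◇⊤), ψ = ⊤, the formulas ⟨!α⟩⟨-φ⟩ψ and
α ∧ ⟨-⟨!α⟩φ⟩⟨!α⟩ψ are not equivalent: some pointed model separates them. -/
theorem stmt13 :
    ∃ (W : Type) (M : Model W) (s : W),
      ¬ (Sat M (.ann (.dia (.atom 0)) (.rem (.neg (.dia .top)) .top)) Set.univ s ↔
         Sat M (Form.and (.dia (.atom 0))
            (.rem (.ann (.dia (.atom 0)) (.neg (.dia .top)))
                  (.ann (.dia (.atom 0)) .top))) Set.univ s) :=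
  ⟨Fin 3, path3, 0, fun h =>
    path3_not_sat_remove_then_announce (h.1 path3_sat_announce_remove_dead_end)⟩
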